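/- arXiv:2110.10130 — 2 statements merged into one kernel-verified Lean document; each statement's English description precedes it below -/
import Mathlib

section
/- For any γ ∈ (0,1/4) and h as in Example 2, choosing δ ∈ (1, 1/(4γ)) gives h(u) > c(e^e+u)(log(e^e+u))^δ for all large u, hence ∫_c^∞ 1/h(u) du < ∞: no function h satisfying both the growth lower bound and the Osgood divergence condition exists. -/
open Real Set MeasureTheory

lemma aux_he1 : (1 : ℝ) < Real.exp 1 := by
  nlinarith [Real.add_one_le_exp (1 : ℝ)]

lemma aux_int11 (β : ℝ) (hβ : 1 < β) :
    MeasureTheory.IntegrableOn (fun x => (Real.log x) ^ (-β) / x)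
      (Ioi (Real.exp 1)) := by
  have hb : β - 1 ≠ 0 := by linarith
  have hderiv : ∀ x ∈ Ici (Real.exp 1),
      HasDerivAt (fun x => -(β - 1)⁻¹ * (Real.log x) ^ (1 - β))
        ((Real.log x) ^ (-β) / x) x := by
    intro x hx
    have hx1 : (1 : ℝ) < x := lt_of_lt_of_le aux_he1 hx
    have hx0 : (0 : ℝ) < x := by linarith
    have hlog : 0 < Real.log x := Real.log_pos hx1
    have h1 : HasDerivAt Real.log x⁻¹ x := Real.hasDerivAt_log hx0.ne'
    have h2 := (h1.rpow_const (p := 1 - β) (Or.inl hlog.ne')).const_mul (-(β - 1)⁻¹)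
    refine h2.congr_deriv ?_
    rw [show (1 : ℝ) - β - 1 = -β by ring]
    field_simp [hb]
    ring
  have hpos : ∀ x ∈ Ioi (Real.exp 1), 0 ≤ (Real.log x) ^ (-β) / x := by
    intro x hx
    have hx0 : (0 : ℝ) < x := lt_trans (Real.exp_pos 1) hx
    have hlog : 0 ≤ Real.log x :=
      Real.log_nonneg (le_of_lt (lt_trans aux_he1 hx))
    exact div_nonneg (Real.rpow_nonneg hlog _) hx0.le
  have htend : Filter.Tendsto (fun x => -(β - 1)⁻¹ * (Real.log x) ^ (1 - β))
      Filter.atTop (nhds 0) := by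
    have h0 : Filter.Tendsto (fun x : ℝ => x ^ (-(β - 1))) Filter.atTop (nhds 0) :=
      tendsto_rpow_neg_atTop (by linarith)
    have := (h0.comp Real.tendsto_log_atTop).const_mul (-(β - 1)⁻¹)
    simpa [Function.comp, mul_zero, show -(β - 1) = 1 - β by ring] using this
  exact integrableOn_Ioi_deriv_of_nonneg' hderiv hpos htend

/-- No positive `h` can satisfy both the growth lower bound coming from
`σ(u) = (e^e+u)(log(e^e+u))^{1/4}/loglog(e^e+u) ≤ u^{1-γ} h(u)^γ` (with
`γ ∈ (0,1/4)`) and the Osgood divergence condition: necessarily `1/h` is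
integrable on `[C,∞)` for some large `C`. -/
theorem stmt11 (γ : ℝ) (hγ : γ ∈ Set.Ioo (0 : ℝ) (1 / 4)) (h : ℝ → ℝ)
    (hmeas : Measurable h)
    (hpos : ∀ u : ℝ, 0 < u → 0 < h u)
    (hσ : ∀ u : ℝ, 1 < u →
      (Real.exp (Real.exp 1) + u) *
          (Real.log (Real.exp (Real.exp 1) + u)) ^ ((1 : ℝ) / 4) /
        Real.log (Real.log (Real.exp (Real.exp 1) + u)) ≤
      u ^ (1 - γ) * (h u) ^ γ) :
    ∃ C : ℝ, 0 < C ∧ MeasureTheory.IntegrableOn (fun u => 1 / h u) (Ici C) := by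
  obtain ⟨hγ0, hγ4⟩ := hγ
  set ε : ℝ := (1 / 4 - γ) / 2 with hε
  have hε0 : 0 < ε := by simp only [hε]; linarith
  have hε4 : ε < 1 / 4 := by simp only [hε]; linarith
  set β : ℝ := (1 / 4 - ε) * γ⁻¹ with hβdef
  have hβ : 1 < β := by
    rw [hβdef, hε]
    rw [show ((1:ℝ) / 4 - (1 / 4 - γ) / 2) * γ⁻¹ = (1 / 8 + γ / 2) / γ by ring,
      lt_div_iff₀ hγ0]
    linarith
  refine ⟨Real.exp 1, Real.exp_pos 1, ?_⟩
  have he1 : (1 : ℝ) < Real.exp 1 := aux_he1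
  -- key pointwise bound
  have key : ∀ u : ℝ, Real.exp 1 < u →
      1 / h u ≤ ε ^ (-γ⁻¹) * ((Real.log u) ^ (-β) / u) := by
    intro u hu
    have hu1 : (1 : ℝ) < u := lt_trans he1 hu
    have hu0 : (0 : ℝ) < u := by linarith
    have hlogu : (1 : ℝ) ≤ Real.log u := by
      rw [← Real.log_exp 1]; exact Real.log_le_log (Real.exp_pos 1) hu.le
    have hlogu0 : (0 : ℝ) < Real.log u := by linarith
    set E : ℝ := Real.exp (Real.exp 1) with hE
    have hE1 : (1 : ℝ) < E := by
      rw [hE]; nlinarith [Real.add_one_le_exp (Real.exp 1), Real.exp_pos 1]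
    set L : ℝ := Real.log (E + u) with hL
    have hEu : (0 : ℝ) < E + u := by linarith
    have hL1 : Real.exp 1 < L := by
      have h1 : Real.log E < L := Real.log_lt_log (by linarith) (by linarith)
      rw [hE, Real.log_exp] at h1
      exact h1
    have hL0 : (1 : ℝ) < L := lt_trans he1 hL1
    have hLL : (0 : ℝ) < Real.log L := Real.log_pos hL0
    -- loglog bound : log L ≤ ε⁻¹ * L ^ ε
    have hloglog : Real.log L ≤ ε⁻¹ * L ^ ε := by
      have h1 : Real.log (L ^ ε) ≤ L ^ ε := by
        have := Real.log_le_sub_one_of_pos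
          (Real.rpow_pos_of_pos (by linarith : (0:ℝ) < L) ε)
        linarith
      rw [Real.log_rpow (by linarith)] at h1
      have h2 := mul_le_mul_of_nonneg_left h1 (by positivity : (0:ℝ) ≤ ε⁻¹)
      have h3 : Real.log L = ε⁻¹ * (ε * Real.log L) := by field_simp
      rw [h3]; exact h2
    -- sigma lower bound
    have hσlb : ε * (u * (Real.log u) ^ ((1 : ℝ) / 4 - ε)) ≤
        u ^ (1 - γ) * (h u) ^ γ := by
      refine le_trans ?_ (hσ u hu1)
      rw [le_div_iff₀ hLL]
      have hb1 : (Real.log u) ^ ((1 : ℝ) / 4 - ε) ≤ L ^ ((1 : ℝ) / 4 - ε) := by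
        apply Real.rpow_le_rpow hlogu0.le _ (by linarith)
        rw [hL]; exact Real.log_le_log hu0 (by linarith)
      have hstep : ε * (u * (Real.log u) ^ ((1 : ℝ) / 4 - ε)) * Real.log L ≤
          ε * (u * L ^ ((1 : ℝ) / 4 - ε)) * (ε⁻¹ * L ^ ε) := by
        apply mul_le_mul
        · apply mul_le_mul_of_nonneg_left _ hε0.le
          exact mul_le_mul_of_nonneg_left hb1 hu0.le
        · exact hloglog
        · exact hLL.le
        · positivity
      refine le_trans hstep ?_
      have heq : ε * (u * L ^ ((1 : ℝ) / 4 - ε)) * (ε⁻¹ * L ^ ε) =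
          u * L ^ ((1 : ℝ) / 4 - ε + ε) := by
        rw [Real.rpow_add (by linarith : (0:ℝ) < L)]
        field_simp
      rw [heq, show (1 : ℝ) / 4 - ε + ε = 1 / 4 by ring]
      apply mul_le_mul_of_nonneg_right (by linarith)
        (Real.rpow_nonneg (by linarith) _)
    -- divide by u^{1-γ}
    have huγ : (0 : ℝ) < u ^ (1 - γ) := Real.rpow_pos_of_pos hu0 _
    have hhγ : ε * u ^ γ * (Real.log u) ^ ((1 : ℝ) / 4 - ε) ≤ (h u) ^ γ := by
      have huu : u ^ ((1:ℝ) - γ) * u ^ γ = u := by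
        rw [← Real.rpow_add hu0, sub_add_cancel, Real.rpow_one]
      have hid : u ^ (1 - γ) * (ε * u ^ γ * (Real.log u) ^ ((1 : ℝ) / 4 - ε)) =
          ε * (u * (Real.log u) ^ ((1 : ℝ) / 4 - ε)) := by
        rw [show u ^ ((1:ℝ) - γ) * (ε * u ^ γ * (Real.log u) ^ ((1 : ℝ) / 4 - ε)) =
          ε * ((u ^ ((1:ℝ) - γ) * u ^ γ) * (Real.log u) ^ ((1 : ℝ) / 4 - ε)) from by ring, huu]
      rw [← hid] at hσlb
      exact (mul_le_mul_iff_right₀ huγ).mp hσlb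
    -- raise to power 1/γ
    have hh : ε ^ γ⁻¹ * (u * (Real.log u) ^ β) ≤ h u := by
      have h1 : (ε * u ^ γ * (Real.log u) ^ ((1 : ℝ) / 4 - ε)) ^ γ⁻¹ ≤
          ((h u) ^ γ) ^ γ⁻¹ := by
        apply Real.rpow_le_rpow (by positivity) hhγ (by positivity)
      rw [Real.rpow_rpow_inv (hpos u hu0).le hγ0.ne'] at h1
      refine le_trans (le_of_eq ?_) h1
      rw [Real.mul_rpow (by positivity) (Real.rpow_nonneg hlogu0.le _),
        Real.mul_rpow hε0.le (Real.rpow_nonneg hu0.le _),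
        Real.rpow_rpow_inv hu0.le hγ0.ne',
        ← Real.rpow_mul hlogu0.le, ← hβdef, mul_assoc]
    -- conclude
    have hden : (0 : ℝ) < ε ^ γ⁻¹ * (u * (Real.log u) ^ β) := by positivity
    have h2 := one_div_le_one_div_of_le hden hh
    refine le_trans h2 (le_of_eq ?_)
    rw [Real.rpow_neg hε0.le, Real.rpow_neg hlogu0.le, one_div, mul_inv, mul_inv,
      div_eq_mul_inv]
    ring
  -- integrability
  rw [integrableOn_Ici_iff_integrableOn_Ioi]
  have hbase := (aux_int11 β hβ).const_mul (ε ^ (-γ⁻¹))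
  refine MeasureTheory.Integrable.mono' hbase ?_ ?_
  · exact ((hmeas.const_div 1).aestronglyMeasurable).restrict
  · rw [MeasureTheory.ae_restrict_iff' measurableSet_Ioi]
    filter_upwards with u hu
    have hu0 : (0 : ℝ) < u := lt_trans (Real.exp_pos 1) hu
    rw [Real.norm_eq_abs, abs_of_nonneg (one_div_nonneg.mpr (hpos u hu0).le)]
    exact key u hu
end

section
/- Let g : [0,∞) → [0,∞) be increasing with g → ∞. Define u₁ = 1 and u_{n+1} = u_n + 1 + g(u_n), and let h be the function with h(u_n) = g(u_n) and 1/h linear on each [u_n, u_{n+1}]. Then ∫_{u_n}^{u_{n+1}} 1/h(u) du = (1/2)(u_{n+1} − u_n)(1/g(u_n) + 1/g(u_{n+1})) ≥ 1/2 for every n, hence ∫_{u₁}^∞ 1/h(u) du = +∞. -/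
open Filter MeasureTheory

/-- Trapezoid construction: with `u₁ = 1`, `u_{n+1} = u_n + 1 + g(u_n)`, and `1/h`
affine on each `[u_n, u_{n+1}]` with `h(u_n) = g(u_n)`, each trapezoid integral
equals `(1/2)(u_{n+1}−u_n)(1/g(u_n)+1/g(u_{n+1})) ≥ 1/2`, hence
`∫_{u₁}^∞ 1/h = +∞`. (Indices: `u 0` is `u₁`.) -/
theorem stmt12 (g h : ℝ → ℝ) (u : ℕ → ℝ)
    (hg_mono : MonotoneOn g (Set.Ici 0))
    (hg_tendsto : Tendsto g atTop atTop)
    (hg_pos : ∀ x : ℝ, 1 ≤ x → 0 < g x)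
    (hu0 : u 0 = 1)
    (hurec : ∀ n, u (n + 1) = u n + 1 + g (u n))
    (hhu : ∀ n, h (u n) = g (u n))
    (hh_affine : ∀ n, ∀ x ∈ Set.Icc (u n) (u (n + 1)),
      1 / h x = 1 / h (u n) +
        (x - u n) / (u (n + 1) - u n) * (1 / h (u (n + 1)) - 1 / h (u n))) :
    (∀ n : ℕ,
      (∫ x in u n..u (n + 1), 1 / h x) =
        (1 / 2) * (u (n + 1) - u n) * (1 / g (u n) + 1 / g (u (n + 1))) ∧
      (1 / 2 : ℝ) ≤ ∫ x in u n..u (n + 1), 1 / h x) ∧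
    Tendsto (fun M : ℝ => ∫ x in (u 0)..M, 1 / h x) atTop atTop := by
  have key : ∀ n, 1 ≤ u n := by
    intro n
    induction n with
    | zero => simp [hu0]
    | succ n ih =>
      have hg := hg_pos _ ih
      rw [hurec]; linarith
  have hgposn : ∀ n, 0 < g (u n) := fun n => hg_pos _ (key n)
  have hlt : ∀ n, u n < u (n + 1) := by
    intro n; have := hgposn n; rw [hurec]; linarith
  have hle : ∀ n, u n ≤ u (n + 1) := fun n => (hlt n).le
  have humono : Monotone u := monotone_nat_of_le_succ hle
  have hun_ge : ∀ n : ℕ, (n : ℝ) + 1 ≤ u n := by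
    intro n
    induction n with
    | zero => simp [hu0]
    | succ n ih =>
      have := hgposn n
      rw [hurec]; push_cast; linarith
  -- the affine representation of 1/h on each interval
  have haffeq : ∀ n, Set.EqOn (fun x => 1 / h x)
      (fun x => 1 / g (u n) + (x - u n) / (u (n + 1) - u n)
        * (1 / g (u (n + 1)) - 1 / g (u n)))
      (Set.Icc (u n) (u (n + 1))) := by
    intro n x hx
    have hx' := hh_affine n x hx
    rw [hhu, hhu] at hx'
    simpa using hx'
  have hcontaff : ∀ n, Continuous (fun x => 1 / g (u n) + (x - u n) / (u (n + 1) - u n)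
        * (1 / g (u (n + 1)) - 1 / g (u n))) := by
    intro n
    exact continuous_const.add
      (((continuous_id.sub continuous_const).div_const _).mul continuous_const)
  -- integrability on each block
  have hint : ∀ n, IntervalIntegrable (fun x => 1 / h x) volume (u n) (u (n + 1)) := by
    intro n
    have h1 : IntervalIntegrable _ volume (u n) (u (n + 1)) := (hcontaff n).intervalIntegrable (u n) (u (n + 1))
    rw [intervalIntegrable_iff_integrableOn_Ioc_of_le (hle n)] at h1 ⊢
    exact h1.congr_fun (fun x hx => (haffeq n (Set.Ioc_subset_Icc_self hx)).symm)
      measurableSet_Ioc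
  -- trapezoid integral formula
  have trap : ∀ (p q a b : ℝ), p < q →
      (∫ x in p..q, (a + (x - p) / (q - p) * (b - a)))
        = (1 / 2) * (q - p) * (a + b) := by
    intro p q a b hpq
    have hne : q - p ≠ 0 := sub_ne_zero.2 hpq.ne'
    set D : ℝ := (b - a) / (q - p) with hD
    have heq : (fun x : ℝ => a + (x - p) / (q - p) * (b - a))
        = fun x : ℝ => (a - D * p) + D * x := by
      funext x
      rw [hD]
      field_simp
      ring
    rw [heq]
    have hcalc : (∫ x in p..q, ((a - D * p) + D * x))
        = ((a - D * p) * q + D * q ^ 2 / 2) - ((a - D * p) * p + D * p ^ 2 / 2) := by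
      apply intervalIntegral.integral_eq_sub_of_hasDerivAt
      · intro x _
        have h1 : HasDerivAt (fun x : ℝ => (a - D * p) * x) (a - D * p) x := by
          simpa using (hasDerivAt_id x).const_mul (a - D * p)
        have h2 : HasDerivAt (fun x : ℝ => D * x ^ 2 / 2) (D * x) x := by
          have := ((hasDerivAt_pow 2 x).const_mul D).div_const 2
          simpa using this.congr_deriv (by ring)
        exact h1.add h2
      · exact (continuous_const.add (continuous_const.mul continuous_id)).intervalIntegrable _ _
    rw [hcalc, hD]
    field_simp
    ring
  -- part 1
  have part1 : ∀ n, (∫ x in u n..u (n + 1), 1 / h x)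
      = (1 / 2) * (u (n + 1) - u n) * (1 / g (u n) + 1 / g (u (n + 1))) := by
    intro n
    have heqon : Set.EqOn (fun x => 1 / h x)
        (fun x => 1 / g (u n) + (x - u n) / (u (n + 1) - u n)
          * (1 / g (u (n + 1)) - 1 / g (u n)))
        (Set.uIcc (u n) (u (n + 1))) := by
      rw [Set.uIcc_of_le (hle n)]; exact haffeq n
    rw [intervalIntegral.integral_congr heqon]
    exact trap _ _ _ _ (hlt n)
  have part1b : ∀ n, (1 / 2 : ℝ) ≤ ∫ x in u n..u (n + 1), 1 / h x := by
    intro n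
    rw [part1 n]
    have ha := hgposn n
    have hb := hgposn (n + 1)
    have h1 : g (u n) * (1 / g (u n)) = 1 := mul_one_div_cancel ha.ne'
    have h2 : 0 < 1 / g (u (n + 1)) := by positivity
    have hΔ : u (n + 1) - u n = 1 + g (u n) := by rw [hurec]; ring
    rw [hΔ]
    nlinarith [mul_pos ha h2, h2, div_pos (one_pos) ha]
  -- positivity of 1/h on [1, ∞)
  have hpos : ∀ x : ℝ, 1 ≤ x → 0 ≤ 1 / h x := by
    intro x hx
    have hex : ∃ n, x ≤ u n := by
      obtain ⟨n, hn⟩ := exists_nat_ge x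
      exact ⟨n, le_trans hn (by linarith [hun_ge n])⟩
    rcases hfind : Nat.find hex with _ | m
    · have hxu : x ≤ u 0 := hfind ▸ Nat.find_spec hex
      have hxe : x = u 0 := le_antisymm (by rwa [hu0] at hxu ⊢) (by rw [hu0]; exact hx)
      rw [hxe, show (1:ℝ)/h (u 0) = 1 / g (u 0) by rw [hhu]]
      exact (one_div_pos.mpr (hgposn 0)).le
    · have hxu : x ≤ u (m + 1) := hfind ▸ Nat.find_spec hex
      have hxl : u m < x := by
        by_contra hc
        push_neg at hc
        have hle' : Nat.find hex ≤ m := Nat.find_le hc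
        omega
      have hmem : x ∈ Set.Icc (u m) (u (m + 1)) := ⟨hxl.le, hxu⟩
      have := haffeq m hmem
      simp only at this
      rw [this]
      set a := 1 / g (u m) with ha'
      set b := 1 / g (u (m + 1)) with hb'
      have ha : 0 < a := by rw [ha']; exact one_div_pos.mpr (hgposn m)
      have hb : 0 < b := by rw [hb']; exact one_div_pos.mpr (hgposn (m + 1))
      have hΔ : 0 < u (m + 1) - u m := sub_pos.2 (hlt m)
      set t := (x - u m) / (u (m + 1) - u m) with ht'
      have ht0 : 0 ≤ t := div_nonneg (by linarith) hΔ.le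
      have ht1 : t ≤ 1 := (div_le_one hΔ).2 (by linarith)
      nlinarith [mul_nonneg (sub_nonneg.2 ht1) ha.le, mul_nonneg ht0 hb.le]
  -- integrability across blocks
  have hintN : ∀ m n : ℕ, m ≤ n → IntervalIntegrable (fun x => 1 / h x) volume (u m) (u n) := by
    intro m n hmn
    induction n with
    | zero =>
      have : m = 0 := Nat.le_zero.mp hmn
      subst this
      exact IntervalIntegrable.refl
    | succ n ih =>
      rcases Nat.lt_or_ge m (n + 1) with hlt' | hge
      · exact (ih (Nat.lt_succ_iff.mp hlt')).trans (hint n)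
      · have : m = n + 1 := le_antisymm hmn hge
        subst this
        exact IntervalIntegrable.refl
  have hintM : ∀ (n : ℕ) (M : ℝ), u n ≤ M →
      IntervalIntegrable (fun x => 1 / h x) volume (u n) M := by
    intro n M hM
    obtain ⟨N, hN⟩ := exists_nat_ge M
    set N' := max n N with hN'
    have hMN : M ≤ u N' := by
      have h1 : (N : ℝ) ≤ u N := by linarith [hun_ge N]
      calc M ≤ (N : ℝ) := hN
        _ ≤ u N := h1
        _ ≤ u N' := humono (le_max_right n N)
    have hbig := hintN n N' (le_max_left n N)
    refine hbig.mono_set ?_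
    rw [Set.uIcc_of_le hM, Set.uIcc_of_le (humono (le_max_left n N))]
    exact Set.Icc_subset_Icc le_rfl hMN
  refine ⟨fun n => ⟨part1 n, part1b n⟩, ?_⟩
  rw [tendsto_atTop]
  intro b
  obtain ⟨n, hn⟩ := exists_nat_ge (2 * b)
  filter_upwards [eventually_ge_atTop (u n)] with M hM
  have hsum : (∫ x in (u 0)..(u n), 1 / h x)
      = ∑ k ∈ Finset.range n, ∫ x in u k..u (k + 1), 1 / h x :=
    (intervalIntegral.sum_integral_adjacent_intervals (fun k _ => hint k)).symm
  have hsumge : (n : ℝ) * (1 / 2) ≤ ∫ x in (u 0)..(u n), 1 / h x := by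
    rw [hsum]
    calc (n : ℝ) * (1 / 2) = ∑ _k ∈ Finset.range n, (1 / 2 : ℝ) := by
          simp [mul_comm]
      _ ≤ _ := Finset.sum_le_sum (fun k _ => part1b k)
  have hsplit : (∫ x in (u 0)..M, 1 / h x)
      = (∫ x in (u 0)..(u n), 1 / h x) + ∫ x in (u n)..M, 1 / h x :=
    (intervalIntegral.integral_add_adjacent_intervals (hintN 0 n (Nat.zero_le n))
      (hintM n M hM)).symm
  have htail : 0 ≤ ∫ x in (u n)..M, 1 / h x := by
    apply intervalIntegral.integral_nonneg hM
    intro x hx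
    exact hpos x (le_trans (key n) hx.1)
  rw [hsplit]
  linarith
end
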